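/- With g_n as above (case a = -1), the generating function G(z) = \sum g_n z^n equals 1/((z/\alpha; q^2)_\infty (z/\beta; q^2)_\infty), where \alpha, \beta are the roots of 1 - (1+q) z - q z^2 = (1 - z/\alpha)(1 - z/\beta) with \alpha < 0 < \beta and \beta < |\alpha|. -/

import Mathlib

/-!
Write `x = q²`, `G(w) = ∑ gₙ wⁿ` and `P(w) = (w/α; x)_∞ (w/β; x)_∞`. Since `gₙ ≥ 0` and the
recurrence contracts `gₙ tⁿ` as soon as `(1 + q) t + q t² < 1`, the series `G` converges on the
disc `|w| < β`. There the recurrence is equivalent to `G(x w) = (1 - w/α)(1 - w/β) G(w)`, while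
`P(w) = (1 - w/α)(1 - w/β) P(x w)`; hence `G · P` is invariant under `w ↦ x w`, and being
continuous at `0` it is constant, equal to `G(0) P(0) = 1`.
-/

/-- The coefficients of case `a = -1` of Proposition 4.1:
`g_0 = 1`, `g_1 = 1/(1-q)`, and `(1 - q^{2n}) g_n = q g_{n-2} + (1+q) g_{n-1}`. -/
noncomputable def gSeq (q : ℝ) : ℕ → ℝ
  | 0 => 1
  | 1 => 1 / (1 - q)
  | (n + 2) => (q * gSeq q n + (1 + q) * gSeq q (n + 1)) / (1 - q ^ (2 * (n + 2)))

open Complex Filter Topology Metric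

lemma eq_of_forall_mul_eq_of_continuousAt {𝕜 X : Type*} [NormedField 𝕜] [TopologicalSpace X]
    [T2Space X] {f : 𝕜 → X} {x : 𝕜} {r : ℝ} (hx : ‖x‖ < 1)
    (hf : ∀ w ∈ ball (0 : 𝕜) r, f (x * w) = f w) (hf₀ : ContinuousAt f 0) {z : 𝕜}
    (hz : z ∈ ball 0 r) : f z = f 0 := by
  have hmem : ∀ n : ℕ, x ^ n * z ∈ ball (0 : 𝕜) r := fun n => by
    rw [mem_ball_zero_iff] at hz ⊢
    rw [norm_mul, norm_pow]
    exact (mul_le_of_le_one_left (norm_nonneg z) (pow_le_one₀ (norm_nonneg x) hx.le)).trans_lt hz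
  have hconst : ∀ n : ℕ, f (x ^ n * z) = f z := fun n => by
    induction n with
    | zero => simp
    | succ n ih => rw [pow_succ', mul_assoc, hf _ (hmem n), ih]
  have hlim : Tendsto (fun n : ℕ => x ^ n * z) atTop (𝓝 0) := by
    simpa using (tendsto_pow_atTop_nhds_zero_of_norm_lt_one hx).mul_const z
  exact tendsto_nhds_unique ((tendsto_const_nhds (x := f z)).congr fun n => (hconst n).symm)
    (hf₀.tendsto.comp hlim)

noncomputable def qPochhammerInf (w x : ℂ) : ℂ := ∏' k : ℕ, (1 - w * x ^ k)

section qPochhammer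

variable {x : ℂ}

lemma multipliable_one_sub_mul_pow (w : ℂ) (hx : ‖x‖ < 1) :
    Multipliable fun k : ℕ => 1 - w * x ^ k := by
  simp_rw [sub_eq_add_neg]
  refine multipliable_one_add_of_summable ?_
  simpa [norm_pow] using (summable_geometric_of_lt_one (norm_nonneg x) hx).mul_left ‖w‖

lemma qPochhammerInf_eq_one_sub_mul (w : ℂ) (hx : ‖x‖ < 1) :
    qPochhammerInf w x = (1 - w) * qPochhammerInf (w * x) x := by
  rw [qPochhammerInf, tprod_eq_zero_mul' ((multipliable_one_sub_mul_pow (w * x) hx).congr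
    fun k => by ring)]
  simp only [pow_zero, mul_one, qPochhammerInf]
  congr 1
  exact tprod_congr fun k => by ring

@[simp]
lemma qPochhammerInf_zero_left (x : ℂ) : qPochhammerInf 0 x = 1 := by
  simp [qPochhammerInf]

lemma continuous_qPochhammerInf (hx : ‖x‖ < 1) : Continuous fun w => qPochhammerInf w x := by
  refine continuous_iff_continuousAt.2 fun w₀ => ?_
  have hprod := Summable.hasProdUniformlyOn_nat_one_add (f := fun k w => -(w * x ^ k))
    (isCompact_closedBall w₀ 1)
    ((summable_geometric_of_lt_one (norm_nonneg x) hx).mul_left (‖w₀‖ + 1))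
    (Eventually.of_forall fun k w hw => ?_) (fun k => by fun_prop)
  · have hcont := hprod.tendstoUniformlyOn_finsetRange.continuousOn
      (Frequently.of_forall fun n => by fun_prop)
    simp only [← sub_eq_add_neg] at hcont
    exact hcont.continuousAt (closedBall_mem_nhds w₀ one_pos)
  · rw [norm_neg, norm_mul, norm_pow]
    gcongr
    exact norm_le_norm_add_const_of_dist_le hw

end qPochhammer

section gSeq

variable {q : ℝ}

lemma gSeq_add_two_mul (hq : |q| < 1) (n : ℕ) :
    gSeq q (n + 2) * (1 - q ^ (2 * (n + 2))) = q * gSeq q n + (1 + q) * gSeq q (n + 1) := by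
  have hpow : q ^ (2 * (n + 2)) < 1 := by
    rw [pow_mul, ← sq_abs]
    exact pow_lt_one₀ (sq_nonneg _) (pow_lt_one₀ (abs_nonneg q) hq two_ne_zero) (by omega)
  rw [gSeq, div_mul_cancel₀ _ (sub_ne_zero.2 hpow.ne')]

lemma gSeq_one_mul (hq : q ≠ 1) : gSeq q 1 * (1 - q ^ 2) = 1 + q := by
  rw [gSeq]
  field_simp [sub_ne_zero.2 hq.symm]
  ring

lemma gSeq_nonneg (hq0 : 0 ≤ q) (hq1 : q < 1) (n : ℕ) : 0 ≤ gSeq q n := by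
  induction n using Nat.strong_induction_on with
  | _ n ih =>
    match n with
    | 0 => norm_num [gSeq]
    | 1 => rw [gSeq]; exact div_nonneg zero_le_one (by linarith)
    | m + 2 =>
      have hpow : q ^ (2 * (m + 2)) < 1 := pow_lt_one₀ hq0 hq1 (by omega)
      rw [gSeq]
      exact div_nonneg (by nlinarith [ih m (by omega), ih (m + 1) (by omega)]) (by linarith)

lemma gSeq_mul_pow_bounded (hq0 : 0 ≤ q) (hq1 : q < 1) {t : ℝ} (ht : 0 ≤ t)
    (hc : (1 + q) * t + q * t ^ 2 < 1) : ∃ M, ∀ n, gSeq q n * t ^ n ≤ M := by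
  have hterm_nonneg : ∀ n, 0 ≤ gSeq q n * t ^ n := fun n =>
    mul_nonneg (gSeq_nonneg hq0 hq1 n) (pow_nonneg ht n)
  obtain ⟨N, hN⟩ := exists_pow_lt_of_lt_one (sub_pos.2 hc) hq1
  set M := ∑ i ∈ Finset.range (N + 2), gSeq q i * t ^ i
  refine ⟨M, fun n => ?_⟩
  induction n using Nat.strong_induction_on with
  | _ n ih =>
    obtain hn | hn := lt_or_ge n (N + 2)
    · exact Finset.single_le_sum (fun i _ => hterm_nonneg i) (Finset.mem_range.2 hn)
    obtain ⟨m, rfl⟩ : ∃ m, n = m + 2 := ⟨n - 2, by omega⟩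
    -- from `N + 2` on, `(1 + q) t + q t² < 1 - q ^ N ≤ 1 - q ^ (2n)`, so the recurrence keeps
    -- `gₙ tⁿ` below `M`
    have hpow : q ^ (2 * (m + 2)) ≤ q ^ N := pow_le_pow_of_le_one hq0 hq1.le (by omega)
    have hrec : gSeq q (m + 2) * t ^ (m + 2) * (1 - q ^ (2 * (m + 2)))
        = q * t ^ 2 * (gSeq q m * t ^ m) + (1 + q) * t * (gSeq q (m + 1) * t ^ (m + 1)) := by
      rw [mul_right_comm, gSeq_add_two_mul (by rwa [abs_of_nonneg hq0]) m]
      ring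
    have hc0 : 0 ≤ (1 + q) * t + q * t ^ 2 := by positivity
    have hM : 0 ≤ M := Finset.sum_nonneg fun i _ => hterm_nonneg i
    have h0 := mul_le_mul_of_nonneg_left (ih m (by omega)) (by positivity : 0 ≤ q * t ^ 2)
    have h1 := mul_le_mul_of_nonneg_left (ih (m + 1) (by omega)) (by positivity : 0 ≤ (1 + q) * t)
    refine le_of_mul_le_mul_right (a := 1 - q ^ (2 * (m + 2))) ?_ (by linarith)
    nlinarith

lemma summable_gSeq_mul_pow (hq0 : 0 ≤ q) (hq1 : q < 1) {β x : ℝ}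
    (hβ : (1 + q) * β + q * β ^ 2 = 1) (hx0 : 0 ≤ x) (hxβ : x < β) :
    Summable fun n => gSeq q n * x ^ n := by
  obtain ⟨t, hxt, htβ⟩ := exists_between hxβ
  have ht : 0 < t := hx0.trans_lt hxt
  have ht2 : t ^ 2 < β ^ 2 := pow_lt_pow_left₀ htβ ht.le two_ne_zero
  obtain ⟨M, hM⟩ := gSeq_mul_pow_bounded hq0 hq1 ht.le
    (by nlinarith [mul_le_mul_of_nonneg_left ht2.le hq0])
  refine Summable.of_nonneg_of_le (fun n => mul_nonneg (gSeq_nonneg hq0 hq1 n) (pow_nonneg hx0 n))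
    (fun n => ?_) ((summable_geometric_of_lt_one (by positivity)
      ((div_lt_one ht).2 hxt)).mul_left M)
  calc gSeq q n * x ^ n = gSeq q n * t ^ n * (x / t) ^ n := by
        rw [div_pow, mul_assoc, mul_div_cancel₀ _ (pow_ne_zero n ht.ne')]
    _ ≤ M * (x / t) ^ n := by gcongr; exact hM n

lemma norm_gSeq_mul_pow (hq0 : 0 ≤ q) (hq1 : q < 1) (w : ℂ) (n : ℕ) :
    ‖(gSeq q n : ℂ) * w ^ n‖ = gSeq q n * ‖w‖ ^ n := by
  rw [norm_mul, norm_pow, norm_real, Real.norm_of_nonneg (gSeq_nonneg hq0 hq1 n)]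

end gSeq

noncomputable def gSeqGenFun (q : ℝ) (w : ℂ) : ℂ := ∑' n : ℕ, (gSeq q n : ℂ) * w ^ n

section gSeqGenFun

variable {q β : ℝ}

lemma hasSum_gSeqGenFun (hq0 : 0 ≤ q) (hq1 : q < 1) (hβ : (1 + q) * β + q * β ^ 2 = 1)
    {w : ℂ} (hw : ‖w‖ < β) : HasSum (fun n => (gSeq q n : ℂ) * w ^ n) (gSeqGenFun q w) := by
  refine (Summable.of_norm ?_).hasSum
  simpa only [norm_gSeq_mul_pow hq0 hq1] using
    summable_gSeq_mul_pow hq0 hq1 hβ (norm_nonneg w) hw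

@[simp]
lemma gSeqGenFun_zero (q : ℝ) : gSeqGenFun q 0 = 1 := by
  rw [gSeqGenFun, tsum_eq_single 0 fun n hn => by simp [hn]]
  simp [gSeq]

lemma continuousOn_gSeqGenFun (hq0 : 0 ≤ q) (hq1 : q < 1) (hβ : (1 + q) * β + q * β ^ 2 = 1) :
    ContinuousOn (gSeqGenFun q) (ball 0 β) := by
  intro z hz
  rw [mem_ball_zero_iff] at hz
  obtain ⟨t, hzt, htβ⟩ := exists_between hz
  have hcont : ContinuousOn (gSeqGenFun q) (closedBall 0 t) :=
    continuousOn_tsum (fun n => by fun_prop)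
      (summable_gSeq_mul_pow hq0 hq1 hβ ((norm_nonneg z).trans hzt.le) htβ) fun n w hw => by
        rw [norm_gSeq_mul_pow hq0 hq1]
        gcongr
        · exact gSeq_nonneg hq0 hq1 n
        · exact mem_closedBall_zero_iff.1 hw
  exact (hcont.continuousAt
    (closedBall_mem_nhds_of_mem (mem_ball_zero_iff.2 hzt))).continuousWithinAt

lemma gSeqGenFun_sq_mul (hq0 : 0 ≤ q) (hq1 : q < 1) (hβ : (1 + q) * β + q * β ^ 2 = 1)
    {w : ℂ} (hw : ‖w‖ < β) :
    gSeqGenFun q ((q : ℂ) ^ 2 * w) = (1 - (1 + q) * w - q * w ^ 2) * gSeqGenFun q w := by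
  have hqw : ‖(q : ℂ) ^ 2 * w‖ < β := by
    rw [norm_mul, norm_pow, norm_real, Real.norm_of_nonneg hq0]
    exact (mul_le_of_le_one_left (norm_nonneg w) (by nlinarith)).trans_lt hw
  have hG := hasSum_gSeqGenFun hq0 hq1 hβ hw
  -- `G(w) - G(q²w) = ∑ gₙ (1 - q²ⁿ) wⁿ`, whose coefficients are given by the recurrence
  have hdiff := hG.sub (hasSum_gSeqGenFun hq0 hq1 hβ hqw)
  rw [← hasSum_nat_add_iff' 2] at hdiff
  have htail : HasSum (fun n => (gSeq q (n + 1) : ℂ) * w ^ (n + 1)) (gSeqGenFun q w - 1) := by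
    simpa [gSeq] using (hasSum_nat_add_iff' 1).2 hG
  have hshift := (hG.mul_left ((q : ℂ) * w ^ 2)).add (htail.mul_left ((1 + q) * w))
  have hrec : ∀ n, (gSeq q (n + 2) : ℂ) * (1 - ((q : ℂ) ^ 2) ^ (n + 2))
      = q * gSeq q n + (1 + q) * gSeq q (n + 1) := fun n => by
    rw [← pow_mul]
    exact_mod_cast gSeq_add_two_mul (by rwa [abs_of_nonneg hq0]) n
  have h1 : (gSeq q 1 : ℂ) * (1 - (q : ℂ) ^ 2) = 1 + q := by
    exact_mod_cast gSeq_one_mul hq1.ne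
  have := hdiff.unique (hshift.congr_fun fun n => by
    linear_combination w ^ (n + 2) * hrec n)
  simp only [Finset.sum_range_succ, Finset.sum_range_zero, zero_add, pow_zero, pow_one, mul_one,
    sub_self] at this
  linear_combination -this - w * h1

lemma gSeqGenFun_mul_qPochhammerInf_sq_mul (hq0 : 0 ≤ q) (hq1 : q < 1)
    (hβ : (1 + q) * β + q * β ^ 2 = 1) {a b : ℂ}
    (hab : ∀ w : ℂ, 1 - (1 + q) * w - q * w ^ 2 = (1 - w / a) * (1 - w / b)) {w : ℂ}
    (hw : ‖w‖ < β) :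
    gSeqGenFun q ((q : ℂ) ^ 2 * w) * (qPochhammerInf ((q : ℂ) ^ 2 * w / a) ((q : ℂ) ^ 2) *
        qPochhammerInf ((q : ℂ) ^ 2 * w / b) ((q : ℂ) ^ 2))
      = gSeqGenFun q w * (qPochhammerInf (w / a) ((q : ℂ) ^ 2) *
        qPochhammerInf (w / b) ((q : ℂ) ^ 2)) := by
  have hx : ‖(q : ℂ) ^ 2‖ < 1 := by
    rw [norm_pow, norm_real, Real.norm_of_nonneg hq0]
    exact pow_lt_one₀ hq0 hq1 two_ne_zero
  have hsplit : ∀ c : ℂ, qPochhammerInf (w / c) ((q : ℂ) ^ 2)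
      = (1 - w / c) * qPochhammerInf ((q : ℂ) ^ 2 * w / c) ((q : ℂ) ^ 2) := fun c => by
    rw [qPochhammerInf_eq_one_sub_mul _ hx, div_mul_eq_mul_div, mul_comm w]
  rw [gSeqGenFun_sq_mul hq0 hq1 hβ hw, hab, hsplit a, hsplit b]
  ring

end gSeqGenFun

lemma quadratic_factorization_ofReal {q α β : ℝ}
    (h : ∀ z : ℝ, 1 - (1 + q) * z - q * z ^ 2 = (1 - z / α) * (1 - z / β)) (w : ℂ) :
    1 - (1 + q) * w - q * w ^ 2 = (1 - w / α) * (1 - w / β) := by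
  have h1 := h 1
  have h2 := h (-1)
  have hs : α⁻¹ + β⁻¹ = 1 + q := by linear_combination (h1 - h2) / 2
  have hp : α⁻¹ * β⁻¹ = -q := by linear_combination -(h1 + h2) / 2
  have hsC : (α : ℂ)⁻¹ + (β : ℂ)⁻¹ = 1 + q := by exact_mod_cast hs
  have hpC : (α : ℂ)⁻¹ * (β : ℂ)⁻¹ = -q := by exact_mod_cast hp
  linear_combination w * hsC - w ^ 2 * hpC

theorem gSeq_generating_function_general (q : ℝ) (hq0 : 0 < q) (hq1 : q < 1) (α β : ℝ)
    (hroots : ∀ z : ℝ, 1 - (1 + q) * z - q * z ^ 2 = (1 - z / α) * (1 - z / β)) :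
    ∀ z : ℂ, ‖z‖ < β →
      HasSum (fun n : ℕ => ((gSeq q n : ℝ) : ℂ) * z ^ n)
        ((∏' k : ℕ, (1 - z / (α : ℂ) * ((q : ℂ) ^ 2) ^ k)) *
          (∏' k : ℕ, (1 - z / (β : ℂ) * ((q : ℂ) ^ 2) ^ k)))⁻¹ := by
  intro z hz
  have hβ0 : 0 < β := (norm_nonneg z).trans_lt hz
  have hβ : (1 + q) * β + q * β ^ 2 = 1 := by
    linarith [div_self hβ0.ne' ▸ hroots β]
  have hx : ‖(q : ℂ) ^ 2‖ < 1 := by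
    rw [norm_pow, norm_real, Real.norm_of_nonneg hq0.le]
    exact pow_lt_one₀ hq0.le hq1 two_ne_zero
  set H : ℂ → ℂ := fun w => gSeqGenFun q w *
    (qPochhammerInf (w / α) ((q : ℂ) ^ 2) * qPochhammerInf (w / β) ((q : ℂ) ^ 2)) with hH
  have hH0 : ContinuousAt H 0 := by
    have hP : ∀ c : ℂ, Continuous fun w : ℂ => qPochhammerInf (w / c) ((q : ℂ) ^ 2) :=
      fun c => (continuous_qPochhammerInf hx).comp (continuous_id.div_const c)
    exact ((continuousOn_gSeqGenFun hq0.le hq1 hβ).continuousAt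
      (isOpen_ball.mem_nhds (mem_ball_self hβ0))).mul ((hP α).mul (hP β)).continuousAt
  have hHz : H z = 1 := by
    refine (eq_of_forall_mul_eq_of_continuousAt hx (fun w hw => ?_) hH0
      (mem_ball_zero_iff.2 hz)).trans (by simp [hH])
    exact gSeqGenFun_mul_qPochhammerInf_sq_mul hq0.le hq1 hβ
      (quadratic_factorization_ofReal hroots) (mem_ball_zero_iff.1 hw)
  change HasSum _
    (qPochhammerInf (z / α) ((q : ℂ) ^ 2) * qPochhammerInf (z / β) ((q : ℂ) ^ 2))⁻¹
  rw [← eq_inv_of_mul_eq_one_left hHz]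
  exact hasSum_gSeqGenFun hq0.le hq1 hβ hz

/-- with `g_n` as above (case `a = -1`), the generating function
`G(z) = ∑ g_n zⁿ` equals `1/((z/α;q²)_∞ (z/β;q²)_∞)`, where `α, β` are the roots of
`1 - (1+q)z - qz² = (1 - z/α)(1 - z/β)` with `α < 0 < β` and `β < |α|`. -/
theorem gSeq_generating_function (q : ℝ) (hq0 : 0 < q) (hq1 : q < 1)
    (α β : ℝ) (hα : α < 0) (hβ : 0 < β) (hβα : β < |α|)
    (hroots : ∀ z : ℝ, 1 - (1 + q) * z - q * z ^ 2 = (1 - z / α) * (1 - z / β)) :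
    ∀ z : ℂ, ‖z‖ < β →
      HasSum (fun n : ℕ => ((gSeq q n : ℝ) : ℂ) * z ^ n)
        ((∏' k : ℕ, (1 - z / (α : ℂ) * ((q : ℂ) ^ 2) ^ k)) *
          (∏' k : ℕ, (1 - z / (β : ℂ) * ((q : ℂ) ^ 2) ^ k)))⁻¹ :=
  gSeq_generating_function_general q hq0 hq1 α β hroots
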